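/- The real 2×2 matrix M = [[−β₅/(β₁·β₃), √2·β/(β₁·β₃)], [√2·β/(β₁·β₃), β₅/(β₁·β₃)]] is orthogonal, i.e. Mᵀ·M is the identity matrix. (This is the unitarity of the (e,4)-cell matrix of the biunitary connection κ for the AH+1 subfactor.) -/
import Mathlib


open Matrix

/-- β = √((7+√17)/2) -/
noncomputable def β : ℝ := Real.sqrt ((7 + Real.sqrt 17) / 2)

/-- β₁ = √((5+√17)/2) -/
noncomputable def β₁ : ℝ := Real.sqrt ((5 + Real.sqrt 17) / 2)

/-- β₃ = √((1+√17)/2) -/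
noncomputable def β₃ : ℝ := Real.sqrt ((1 + Real.sqrt 17) / 2)

/-- β₅ = √((−3+√17)/2) -/
noncomputable def β₅ : ℝ := Real.sqrt ((-3 + Real.sqrt 17) / 2)

/-- The (e,4)-cell matrix of the biunitary connection κ for AH+1. -/
noncomputable def M : Matrix (Fin 2) (Fin 2) ℝ :=
  !![-β₅ / (β₁ * β₃), Real.sqrt 2 * β / (β₁ * β₃);
     Real.sqrt 2 * β / (β₁ * β₃), β₅ / (β₁ * β₃)]

lemma s17 : Real.sqrt 17 ^ 2 = 17 := Real.sq_sqrt (by norm_num)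

lemma s17_lt : Real.sqrt 17 < 5 := by
  nlinarith [Real.sq_sqrt (show (17:ℝ) ≥ 0 by norm_num), Real.sqrt_nonneg 17]

lemma s17_gt : (3:ℝ) < Real.sqrt 17 := by
  nlinarith [Real.sq_sqrt (show (17:ℝ) ≥ 0 by norm_num), Real.sqrt_nonneg 17]

lemma hβ : β ^ 2 = (7 + Real.sqrt 17) / 2 :=
  Real.sq_sqrt (by nlinarith [s17_gt])

lemma hβ₁ : β₁ ^ 2 = (5 + Real.sqrt 17) / 2 :=
  Real.sq_sqrt (by nlinarith [s17_gt])

lemma hβ₃ : β₃ ^ 2 = (1 + Real.sqrt 17) / 2 :=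
  Real.sq_sqrt (by nlinarith [s17_gt])

lemma hβ₅ : β₅ ^ 2 = (-3 + Real.sqrt 17) / 2 :=
  Real.sq_sqrt (by nlinarith [s17_gt])

lemma hβ₁pos : 0 < β₁ := Real.sqrt_pos.mpr (by nlinarith [s17_gt])
lemma hβ₃pos : 0 < β₃ := Real.sqrt_pos.mpr (by nlinarith [s17_gt])

lemma h2 : Real.sqrt 2 ^ 2 = 2 := Real.sq_sqrt (by norm_num)

/-- The (e,4)-cell matrix of the connection κ for AH+1 is orthogonal. -/
theorem stmt_2 : Mᵀ * M = (1 : Matrix (Fin 2) (Fin 2) ℝ) := by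
  have h1 := hβ₁pos.ne'
  have h3 := hβ₃pos.ne'
  ext i j
  fin_cases i <;> fin_cases j <;>
    simp [M, Matrix.mul_apply, Fin.sum_univ_two, Matrix.one_apply, Matrix.vecHead,
      Matrix.vecTail] <;>
    field_simp <;>
    nlinarith [hβ, hβ₁, hβ₃, hβ₅, h2, s17]
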